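/- Let A ∈ M(n,ℂ) satisfy the Okubo conditions and let ρ_1, ρ_2 ∈ ℂ with ρ_1ρ_2 ≠ 0. Then: (i) Â V̂ ⊆ V̂ and Ê_i V̂ ⊆ V̂ for every i = 1,…,p+1; (ii) the restriction of Â to V̂ is injective, so that dim(Â V̂) = dim V̂ = n + rank B; and (iii) for every τ ∈ ℂ and every i = 1,…,p+1, dim((Â + τI_{2n})Ê_i V̂) = n_i and dim(Ê_i(Â + τI_{2n}) V̂) = n_i, where n_{p+1} := rank B. In other words, the extended matrix Â restricted to V̂ again satisfies the Okubo conditions with respect to the extended partition (n_1,…,n_p,n_{p+1}). -/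

import Mathlib

open Matrix

/-- For the partition `n = n_1 + ⋯ + n_p`, realized by the index type
`Σ i, Fin (n_i)`, the diagonal idempotent `E_i` which is the identity on the rows of the
`i`-th block and zero elsewhere. -/
noncomputable def Eproj (p : ℕ) (nn : Fin p → ℕ) (i : Fin p) :
    Matrix ((j : Fin p) × Fin (nn j)) ((j : Fin p) × Fin (nn j)) ℂ :=
  fun x y => if x = y ∧ x.1 = i then 1 else 0

/-- The extended matrix `Â = [[A, I],[−B, (ρ_1+ρ_2)I − A]] ∈ M(2n,ℂ)`, where
`B := (A−ρ_1I)(A−ρ_2I)`. -/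
noncomputable def Ahat {ι : Type} [Fintype ι] [DecidableEq ι]
    (A : Matrix ι ι ℂ) (ρ₁ ρ₂ : ℂ) : Matrix (ι ⊕ ι) (ι ⊕ ι) ℂ :=
  Matrix.fromBlocks A 1
    (-((A - ρ₁ • 1) * (A - ρ₂ • 1))) ((ρ₁ + ρ₂) • 1 - A)

/-- The subspace `V̂ = {(u,v) ∈ ℂ^n × ℂ^n : v ∈ Im B} ⊆ ℂ^{2n}`,
where `B := (A−ρ_1I)(A−ρ_2I)`. -/
noncomputable def Vhat {ι : Type} [Fintype ι] [DecidableEq ι]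
    (A : Matrix ι ι ℂ) (ρ₁ ρ₂ : ℂ) : Submodule ℂ (ι ⊕ ι → ℂ) :=
  Submodule.comap (LinearMap.funLeft ℂ ℂ (Sum.inr : ι → ι ⊕ ι))
    (LinearMap.range ((A - ρ₁ • 1) * (A - ρ₂ • 1)).mulVecLin)

/-- The idempotents `Ê_i ∈ M(2n,ℂ)` (`i = 1,…,p+1`) of the extended partition:
for `i ≤ p` the projection onto block `i` of the first factor `ℂ^n`, and for
`i = p+1` the projection onto the second factor `ℂ^n`. -/
noncomputable def Ehat (p : ℕ) (nn : Fin p → ℕ) (i : Fin (p + 1)) :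
    Matrix (((j : Fin p) × Fin (nn j)) ⊕ ((j : Fin p) × Fin (nn j)))
      (((j : Fin p) × Fin (nn j)) ⊕ ((j : Fin p) × Fin (nn j))) ℂ :=
  if h : (i : ℕ) < p then Matrix.fromBlocks (Eproj p nn ⟨i, h⟩) 0 0 0
  else Matrix.fromBlocks 0 0 0 1

/-- The extended partition `(n_1,…,n_p,n_{p+1})` with `n_{p+1} := rank B`, where
`B := (A−ρ_1I)(A−ρ_2I)`. -/
noncomputable def nhat {ι : Type} [Fintype ι] [DecidableEq ι] (p : ℕ) (nn : Fin p → ℕ)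
    (A : Matrix ι ι ℂ) (ρ₁ ρ₂ : ℂ) (i : Fin (p + 1)) : ℕ :=
  if h : (i : ℕ) < p then nn ⟨i, h⟩ else ((A - ρ₁ • 1) * (A - ρ₂ • 1)).rank

/-!
Put `B = (A - ρ₁)(A - ρ₂)` and `C = (ρ₁ + ρ₂) - A`; these commute with `A` and with each other,
and `B + C A = ρ₁ ρ₂`. Hence `[[C, -1], [B, A]] Â = ρ₁ ρ₂`, so `Â` is injective. The space `V̂` is
the column space of `N = diag(1, B)` (`Nhat`), and `Â N = N [[A, B], [-1, C]]` and
`Ê_i N = N Ê_i` give the invariance. Every `M V̂` is the column space of `M N`, so the dimensions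
in (iii) are ranks: they are at most `rank (Ê_i N) = n̂_i`, and at least the rank of one block of
`(Â + τ) Ê_i N` or of `Ê_i (Â + τ) N`, which is `(A + τ) E_i`, `E_i (A + τ)`, `B` or `-B`.
-/

open Module

section BlockRank

variable {K : Type*} [Field K] {l m n o : Type*}

theorem Submodule.finrank_prod {M M' : Type*} [AddCommGroup M] [Module K M] [AddCommGroup M']
    [Module K M'] (p : Submodule K M) (q : Submodule K M') [FiniteDimensional K p]
    [FiniteDimensional K q] : finrank K (p.prod q) = finrank K p + finrank K q := by
  have hinj : Function.Injective (p.subtype.prodMap q.subtype) :=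
    Prod.map_injective.2 ⟨p.injective_subtype, q.injective_subtype⟩
  rw [← p.range_subtype, ← q.range_subtype, ← LinearMap.range_prodMap,
    LinearMap.finrank_range_of_inj hinj, Module.finrank_prod, p.range_subtype, q.range_subtype]

theorem Matrix.mulVecLin_fromBlocks_zero₁₂_zero₂₁ [Fintype n] [Fintype o] (A : Matrix l n K)
    (D : Matrix m o K) :
    (fromBlocks A 0 0 D).mulVecLin =
      ((LinearEquiv.sumArrowLequivProdArrow l m K K).symm : _ →ₗ[K] _) ∘ₗ
        A.mulVecLin.prodMap D.mulVecLin ∘ₗ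
          (LinearEquiv.sumArrowLequivProdArrow n o K K : _ →ₗ[K] _) := by
  ext x (i | i) <;> simp [fromBlocks_mulVec] <;> rfl

theorem Matrix.rank_fromBlocks_zero₁₂_zero₂₁ [Fintype n] [Fintype o] (A : Matrix l n K)
    (D : Matrix m o K) : (fromBlocks A 0 0 D).rank = A.rank + D.rank := by
  rw [rank, mulVecLin_fromBlocks_zero₁₂_zero₂₁, LinearMap.range_comp,
    LinearMap.range_comp_of_range_eq_top _ (LinearEquiv.range _), LinearEquiv.finrank_map_eq,
    LinearMap.range_prodMap, Submodule.finrank_prod, rank, rank]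

theorem Matrix.rank_neg [Fintype n] (M : Matrix m n K) : (-M).rank = M.rank := by
  rw [← neg_one_smul K M]
  exact rank_smul_of_mem_nonZeroDivisors M
    (mem_nonZeroDivisors_of_ne_zero (neg_ne_zero.2 one_ne_zero))

theorem Matrix.rank_toBlocks₁₁_le [Fintype n] [Fintype o] (M : Matrix (l ⊕ m) (n ⊕ o) K) :
    M.toBlocks₁₁.rank ≤ M.rank :=
  rank_submatrix_le M Sum.inl Sum.inl

theorem Matrix.rank_toBlocks₁₂_le [Fintype n] [Fintype o] (M : Matrix (l ⊕ m) (n ⊕ o) K) :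
    M.toBlocks₁₂.rank ≤ M.rank :=
  rank_submatrix_le M Sum.inl Sum.inr

theorem Matrix.rank_toBlocks₂₁_le [Fintype n] [Fintype o] (M : Matrix (l ⊕ m) (n ⊕ o) K) :
    M.toBlocks₂₁.rank ≤ M.rank :=
  rank_submatrix_le M Sum.inr Sum.inl

theorem Matrix.comap_inr_range_eq_range_fromBlocks [Fintype l] [DecidableEq l] [Fintype n]
    (B : Matrix m n K) :
    Submodule.comap (LinearMap.funLeft K K (Sum.inr : m → l ⊕ m)) (LinearMap.range B.mulVecLin) =
      LinearMap.range (fromBlocks (1 : Matrix l l K) 0 0 B).mulVecLin := by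
  ext x
  simp only [Submodule.mem_comap, LinearMap.mem_range, mulVecLin_apply]
  constructor
  · rintro ⟨y, hy⟩
    refine ⟨Sum.elim (x ∘ Sum.inl) y, ?_⟩
    ext (i | i) <;> simp [fromBlocks_mulVec, hy]
  · rintro ⟨z, rfl⟩
    exact ⟨z ∘ Sum.inr, by ext i; simp [fromBlocks_mulVec]⟩

theorem Matrix.map_mulVecLin_range [Fintype m] [Fintype n] (M : Matrix l m K) (N : Matrix m n K) :
    Submodule.map M.mulVecLin (LinearMap.range N.mulVecLin) =
      LinearMap.range (M * N).mulVecLin := by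
  rw [mulVecLin_mul, LinearMap.range_comp]

theorem Matrix.map_mulVecLin_range_le_of_mul_eq [Fintype m] [Fintype n] {M : Matrix m m K}
    {N : Matrix m n K} {D : Matrix n n K} (h : M * N = N * D) :
    Submodule.map M.mulVecLin (LinearMap.range N.mulVecLin) ≤ LinearMap.range N.mulVecLin := by
  rw [map_mulVecLin_range, h, mulVecLin_mul]
  exact LinearMap.range_comp_le_range _ _

end BlockRank

noncomputable def Nhat {ι : Type} [Fintype ι] [DecidableEq ι] (A : Matrix ι ι ℂ) (ρ₁ ρ₂ : ℂ) :
    Matrix (ι ⊕ ι) (ι ⊕ ι) ℂ :=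
  fromBlocks 1 0 0 ((A - ρ₁ • 1) * (A - ρ₂ • 1))

section Extension

variable {ι : Type} [Fintype ι] [DecidableEq ι] (A : Matrix ι ι ℂ) (ρ₁ ρ₂ : ℂ)

local notation "B" => (A - ρ₁ • 1) * (A - ρ₂ • 1)
local notation "C" => (ρ₁ + ρ₂) • (1 : Matrix ι ι ℂ) - A

theorem commute_A_B : Commute A B :=
  ((Commute.refl A).sub_right ((Commute.one_right A).smul_right ρ₁)).mul_right
    ((Commute.refl A).sub_right ((Commute.one_right A).smul_right ρ₂))

theorem commute_A_C : Commute A C :=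
  ((Commute.one_right A).smul_right _).sub_right (Commute.refl A)

theorem commute_B_C : Commute B C :=
  ((commute_A_C A ρ₁ ρ₂).sub_left ((Commute.one_left _).smul_left ρ₁)).mul_left
    ((commute_A_C A ρ₁ ρ₂).sub_left ((Commute.one_left _).smul_left ρ₂))

theorem B_add_C_mul_A : B + C * A = (ρ₁ * ρ₂) • 1 := by
  simp only [mul_sub, sub_mul, smul_mul_assoc, mul_smul_comm, one_mul, mul_one]
  module

theorem fromBlocks_mul_Ahat :
    fromBlocks C (-1) B A * Ahat A ρ₁ ρ₂ = (ρ₁ * ρ₂) • 1 := by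
  have hBC := B_add_C_mul_A A ρ₁ ρ₂
  rw [Ahat, fromBlocks_multiply, ← fromBlocks_one, fromBlocks_smul]
  congr 1 <;> simp [add_comm, (commute_A_B A ρ₁ ρ₂).eq, (commute_A_C A ρ₁ ρ₂).eq, hBC]

theorem Ahat_mulVec_injective (hρ : ρ₁ * ρ₂ ≠ 0) : Function.Injective (Ahat A ρ₁ ρ₂).mulVec := by
  intro x y hxy
  have := congrArg (fromBlocks C (-1) B A *ᵥ ·) hxy
  simp only [mulVec_mulVec, fromBlocks_mul_Ahat, smul_mulVec, one_mulVec] at this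
  exact smul_right_injective _ hρ this

theorem Ahat_mul_Nhat : Ahat A ρ₁ ρ₂ * Nhat A ρ₁ ρ₂ = Nhat A ρ₁ ρ₂ * fromBlocks A B (-1) C := by
  rw [Ahat, Nhat, fromBlocks_multiply, fromBlocks_multiply]
  simp [(commute_B_C A ρ₁ ρ₂).eq]

theorem Ahat_add_smul (τ : ℂ) :
    Ahat A ρ₁ ρ₂ + τ • 1 = fromBlocks (A + τ • 1) 1 (-B) (C + τ • 1) := by
  rw [Ahat, ← fromBlocks_one, fromBlocks_smul, fromBlocks_add]
  simp

theorem Ahat_add_smul_mul_Nhat (τ : ℂ) :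
    (Ahat A ρ₁ ρ₂ + τ • 1) * Nhat A ρ₁ ρ₂ = Nhat A ρ₁ ρ₂ * (fromBlocks A B (-1) C + τ • 1) := by
  rw [add_mul, Ahat_mul_Nhat, mul_add, smul_mul_assoc, mul_smul_comm, one_mul, mul_one]

theorem Vhat_eq_range : Vhat A ρ₁ ρ₂ = LinearMap.range (Nhat A ρ₁ ρ₂).mulVecLin :=
  comap_inr_range_eq_range_fromBlocks _

theorem map_Ahat_Vhat_le :
    Submodule.map (Ahat A ρ₁ ρ₂).mulVecLin (Vhat A ρ₁ ρ₂) ≤ Vhat A ρ₁ ρ₂ := by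
  rw [Vhat_eq_range]
  exact map_mulVecLin_range_le_of_mul_eq (Ahat_mul_Nhat A ρ₁ ρ₂)

theorem finrank_map_Vhat (M : Matrix (ι ⊕ ι) (ι ⊕ ι) ℂ) :
    finrank ℂ (Submodule.map M.mulVecLin (Vhat A ρ₁ ρ₂)) = (M * Nhat A ρ₁ ρ₂).rank := by
  rw [Vhat_eq_range, map_mulVecLin_range, rank]

theorem finrank_Vhat : finrank ℂ (Vhat A ρ₁ ρ₂) = Fintype.card ι + rank B := by
  rw [Vhat_eq_range, ← rank, Nhat, rank_fromBlocks_zero₁₂_zero₂₁, rank_one]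

theorem finrank_map_Ahat_Vhat (hρ : ρ₁ * ρ₂ ≠ 0) :
    finrank ℂ (Submodule.map (Ahat A ρ₁ ρ₂).mulVecLin (Vhat A ρ₁ ρ₂)) = finrank ℂ (Vhat A ρ₁ ρ₂) :=
  (Submodule.equivMapOfInjective _ (Ahat_mulVec_injective A ρ₁ ρ₂ hρ) _).finrank_eq.symm

end Extension

section Okubo

variable (p : ℕ) (nn : Fin p → ℕ)

theorem rank_Eproj (i : Fin p) : (Eproj p nn i).rank = nn i := by
  have hdiag : Eproj p nn i = diagonal fun x => if x.1 = i then 1 else 0 := by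
    ext x y
    by_cases h : x = y <;> simp [Eproj, h]
  rw [hdiag, rank_diagonal, ← Fintype.card_fin (nn i)]
  exact Fintype.card_congr <|
    (Equiv.subtypeEquivRight fun x => by simp).trans (Equiv.sigmaSubtype i)

theorem Ehat_castSucc (j : Fin p) : Ehat p nn j.castSucc = fromBlocks (Eproj p nn j) 0 0 0 := by
  simp [Ehat]

theorem Ehat_last : Ehat p nn (Fin.last p) = fromBlocks 0 0 0 1 := by
  simp [Ehat]

variable (A : Matrix ((j : Fin p) × Fin (nn j)) ((j : Fin p) × Fin (nn j)) ℂ) (ρ₁ ρ₂ : ℂ)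

theorem nhat_castSucc (j : Fin p) : nhat p nn A ρ₁ ρ₂ j.castSucc = nn j := by
  simp [nhat]

theorem nhat_last : nhat p nn A ρ₁ ρ₂ (Fin.last p) = ((A - ρ₁ • 1) * (A - ρ₂ • 1)).rank := by
  simp [nhat]

theorem Ehat_mul_Nhat (i : Fin (p + 1)) :
    Ehat p nn i * Nhat A ρ₁ ρ₂ = Nhat A ρ₁ ρ₂ * Ehat p nn i := by
  induction i using Fin.lastCases <;> simp [Ehat_castSucc, Ehat_last, Nhat, fromBlocks_multiply]

theorem map_Ehat_Vhat_le (i : Fin (p + 1)) :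
    Submodule.map (Ehat p nn i).mulVecLin (Vhat A ρ₁ ρ₂) ≤ Vhat A ρ₁ ρ₂ := by
  rw [Vhat_eq_range]
  exact map_mulVecLin_range_le_of_mul_eq (Ehat_mul_Nhat p nn A ρ₁ ρ₂ i)

theorem rank_Ehat_mul_Nhat (i : Fin (p + 1)) :
    (Ehat p nn i * Nhat A ρ₁ ρ₂).rank = nhat p nn A ρ₁ ρ₂ i := by
  induction i using Fin.lastCases with
  | last => simp [Ehat_last, nhat_last, Nhat, fromBlocks_multiply, rank_fromBlocks_zero₁₂_zero₂₁]
  | cast j =>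
    simp [Ehat_castSucc, nhat_castSucc, Nhat, fromBlocks_multiply, rank_fromBlocks_zero₁₂_zero₂₁,
      rank_Eproj]

theorem nhat_le_rank_add_smul_mul_Ehat_mul_Nhat
    (h : ∀ i (τ : ℂ), ((A + τ • 1) * Eproj p nn i).rank = nn i) (τ : ℂ) (i : Fin (p + 1)) :
    nhat p nn A ρ₁ ρ₂ i ≤ ((Ahat A ρ₁ ρ₂ + τ • 1) * Ehat p nn i * Nhat A ρ₁ ρ₂).rank := by
  rw [Ahat_add_smul]
  induction i using Fin.lastCases with
  | last =>
    refine (rank_toBlocks₁₂_le _).trans_eq' ?_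
    simp [Ehat_last, nhat_last, Nhat, fromBlocks_multiply]
  | cast j =>
    refine (rank_toBlocks₁₁_le _).trans_eq' ?_
    simp [Ehat_castSucc, nhat_castSucc, Nhat, fromBlocks_multiply, h]

theorem nhat_le_rank_Ehat_mul_add_smul_mul_Nhat
    (h : ∀ i (τ : ℂ), (Eproj p nn i * (A + τ • 1)).rank = nn i) (τ : ℂ) (i : Fin (p + 1)) :
    nhat p nn A ρ₁ ρ₂ i ≤ (Ehat p nn i * (Ahat A ρ₁ ρ₂ + τ • 1) * Nhat A ρ₁ ρ₂).rank := by
  rw [Ahat_add_smul]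
  induction i using Fin.lastCases with
  | last =>
    refine (rank_toBlocks₂₁_le _).trans_eq' ?_
    simp [Ehat_last, nhat_last, Nhat, fromBlocks_multiply, rank_neg]
  | cast j =>
    refine (rank_toBlocks₁₁_le _).trans_eq' ?_
    simp [Ehat_castSucc, nhat_castSucc, Nhat, fromBlocks_multiply, h]

theorem finrank_map_add_smul_mul_Ehat_Vhat
    (h : ∀ i (τ : ℂ), ((A + τ • 1) * Eproj p nn i).rank = nn i) (τ : ℂ) (i : Fin (p + 1)) :
    finrank ℂ (Submodule.map ((Ahat A ρ₁ ρ₂ + τ • 1) * Ehat p nn i).mulVecLin (Vhat A ρ₁ ρ₂)) =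
      nhat p nn A ρ₁ ρ₂ i := by
  rw [finrank_map_Vhat]
  refine le_antisymm ?_ (nhat_le_rank_add_smul_mul_Ehat_mul_Nhat p nn A ρ₁ ρ₂ h τ i)
  rw [← rank_Ehat_mul_Nhat, mul_assoc]
  exact rank_mul_le_right _ _

theorem finrank_map_Ehat_mul_add_smul_Vhat
    (h : ∀ i (τ : ℂ), (Eproj p nn i * (A + τ • 1)).rank = nn i) (τ : ℂ) (i : Fin (p + 1)) :
    finrank ℂ (Submodule.map (Ehat p nn i * (Ahat A ρ₁ ρ₂ + τ • 1)).mulVecLin (Vhat A ρ₁ ρ₂)) =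
      nhat p nn A ρ₁ ρ₂ i := by
  rw [finrank_map_Vhat]
  refine le_antisymm ?_ (nhat_le_rank_Ehat_mul_add_smul_mul_Nhat p nn A ρ₁ ρ₂ h τ i)
  rw [← rank_Ehat_mul_Nhat, mul_assoc, Ahat_add_smul_mul_Nhat, ← mul_assoc]
  exact rank_mul_le_left _ _

end Okubo

theorem stmt_9_general (p : ℕ) (nn : Fin p → ℕ)
    (A : Matrix ((j : Fin p) × Fin (nn j)) ((j : Fin p) × Fin (nn j)) ℂ)
    (hOstar : ∀ (i : Fin p) (τ : ℂ),
      ((A + τ • 1) * Eproj p nn i).rank = nn i ∧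
      (Eproj p nn i * (A + τ • 1)).rank = nn i)
    (ρ₁ ρ₂ : ℂ) (hρ : ρ₁ * ρ₂ ≠ 0) :
    (Submodule.map (Ahat A ρ₁ ρ₂).mulVecLin (Vhat A ρ₁ ρ₂) ≤ Vhat A ρ₁ ρ₂ ∧
      ∀ i : Fin (p + 1),
        Submodule.map (Ehat p nn i).mulVecLin (Vhat A ρ₁ ρ₂) ≤ Vhat A ρ₁ ρ₂) ∧
    ((∀ x ∈ Vhat A ρ₁ ρ₂, (Ahat A ρ₁ ρ₂).mulVecLin x = 0 → x = 0) ∧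
      Module.finrank ℂ (Submodule.map (Ahat A ρ₁ ρ₂).mulVecLin (Vhat A ρ₁ ρ₂)) =
        Module.finrank ℂ (Vhat A ρ₁ ρ₂) ∧
      Module.finrank ℂ (Vhat A ρ₁ ρ₂) =
        (∑ i, nn i) + ((A - ρ₁ • 1) * (A - ρ₂ • 1)).rank) ∧
    (∀ (τ : ℂ) (i : Fin (p + 1)),
      Module.finrank ℂ
          (Submodule.map ((Ahat A ρ₁ ρ₂ + τ • 1) * Ehat p nn i).mulVecLin
            (Vhat A ρ₁ ρ₂)) = nhat p nn A ρ₁ ρ₂ i ∧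
      Module.finrank ℂ
          (Submodule.map (Ehat p nn i * (Ahat A ρ₁ ρ₂ + τ • 1)).mulVecLin
            (Vhat A ρ₁ ρ₂)) = nhat p nn A ρ₁ ρ₂ i) := by
  refine ⟨⟨map_Ahat_Vhat_le A ρ₁ ρ₂, map_Ehat_Vhat_le p nn A ρ₁ ρ₂⟩,
    ⟨fun x _ hx => Ahat_mulVec_injective A ρ₁ ρ₂ hρ (hx.trans (mulVec_zero _).symm),
      finrank_map_Ahat_Vhat A ρ₁ ρ₂ hρ, ?_⟩,
    fun τ i => ⟨finrank_map_add_smul_mul_Ehat_Vhat p nn A ρ₁ ρ₂ (fun i τ => (hOstar i τ).1) τ i,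
      finrank_map_Ehat_mul_add_smul_Vhat p nn A ρ₁ ρ₂ (fun i τ => (hOstar i τ).2) τ i⟩⟩
  simp only [finrank_Vhat, Fintype.card_sigma, Fintype.card_fin]

/-- If `A` satisfies the Okubo conditions and `ρ_1ρ_2 ≠ 0`, then
(i) `V̂` is invariant under `Â` and each `Ê_i`; (ii) `Â` is injective on `V̂`, so
`dim(Â V̂) = dim V̂ = n + rank B`; (iii) for all `τ ∈ ℂ` and `i`,
`dim((Â+τ)Ê_i V̂) = n_i = dim(Ê_i(Â+τ) V̂)`: i.e. `Â|_{V̂}` satisfies the Okubo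
conditions for the extended partition `(n_1,…,n_p, rank B)`. -/
theorem stmt_9 (p : ℕ) (nn : Fin p → ℕ) (hpos : ∀ i, 0 < nn i)
    (A : Matrix ((j : Fin p) × Fin (nn j)) ((j : Fin p) × Fin (nn j)) ℂ)
    (hrank : A.rank = ∑ i, nn i)
    (hOstar : ∀ (i : Fin p) (τ : ℂ),
      ((A + τ • 1) * Eproj p nn i).rank = nn i ∧
      (Eproj p nn i * (A + τ • 1)).rank = nn i)
    (ρ₁ ρ₂ : ℂ) (hρ : ρ₁ * ρ₂ ≠ 0) :
    (Submodule.map (Ahat A ρ₁ ρ₂).mulVecLin (Vhat A ρ₁ ρ₂) ≤ Vhat A ρ₁ ρ₂ ∧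
      ∀ i : Fin (p + 1),
        Submodule.map (Ehat p nn i).mulVecLin (Vhat A ρ₁ ρ₂) ≤ Vhat A ρ₁ ρ₂) ∧
    ((∀ x ∈ Vhat A ρ₁ ρ₂, (Ahat A ρ₁ ρ₂).mulVecLin x = 0 → x = 0) ∧
      Module.finrank ℂ (Submodule.map (Ahat A ρ₁ ρ₂).mulVecLin (Vhat A ρ₁ ρ₂)) =
        Module.finrank ℂ (Vhat A ρ₁ ρ₂) ∧
      Module.finrank ℂ (Vhat A ρ₁ ρ₂) =
        (∑ i, nn i) + ((A - ρ₁ • 1) * (A - ρ₂ • 1)).rank) ∧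
    (∀ (τ : ℂ) (i : Fin (p + 1)),
      Module.finrank ℂ
          (Submodule.map ((Ahat A ρ₁ ρ₂ + τ • 1) * Ehat p nn i).mulVecLin
            (Vhat A ρ₁ ρ₂)) = nhat p nn A ρ₁ ρ₂ i ∧
      Module.finrank ℂ
          (Submodule.map (Ehat p nn i * (Ahat A ρ₁ ρ₂ + τ • 1)).mulVecLin
            (Vhat A ρ₁ ρ₂)) = nhat p nn A ρ₁ ρ₂ i) :=
  stmt_9_general p nn A hOstar ρ₁ ρ₂ hρ
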